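/- arXiv:1107.5326 — 2 statements merged into one kernel-verified Lean document; each statement's English description precedes it below -/
import Mathlib

section
/- Let h > 0, k > 0, K_m > 0 and K_cm ∈ ℝ with |K_cm| < K_m. Define ξ(z) = (2z + h)/(2h) and K(z) = K_m + K_cm · ξ(z)^k for z ∈ [-h/2, h/2]. Then for every z ∈ [-h/2, h/2], ∫_{-h/2}^{z} 1/K(s) ds = (h/K_m) · Σ_{n=0}^{∞} (-K_cm/K_m)^n · ξ(z)^{n k + 1} / (n k + 1). -/
/-! Expand `1 / K` as a geometric series in `-(K_cm / K_m) ξ^k`, which converges uniformly on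
`[0, 1]` since `|K_cm| < K_m`, and integrate term by term after the affine change of variables
`t = ξ(s)`. -/

open MeasureTheory Set

lemma hasSum_inv_add_mul_geometric {𝕜 : Type*} [NormedField 𝕜] [CompleteSpace 𝕜] {a b u : 𝕜}
    (h : ‖b * u‖ < ‖a‖) :
    HasSum (fun n : ℕ => a⁻¹ * (-b / a) ^ n * u ^ n) (a + b * u)⁻¹ := by
  have ha : a ≠ 0 := norm_pos_iff.mp ((norm_nonneg _).trans_lt h)
  have hq : ‖-b / a * u‖ < 1 := by
    rwa [div_mul_eq_mul_div, norm_div, neg_mul, norm_neg, div_lt_one (norm_pos_iff.mpr ha)]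
  have hsum : (a + b * u)⁻¹ = a⁻¹ * (1 - -b / a * u)⁻¹ := by
    rw [← mul_inv, mul_sub, mul_one]
    field_simp
    ring
  simpa only [hsum, mul_pow, mul_assoc] using (hasSum_geometric_of_norm_lt_one hq).mul_left a⁻¹

lemma hasSum_inv_add_mul_rpow {a b k t : ℝ} (hab : |b| < a) (hk : 0 ≤ k) (ht₀ : 0 ≤ t)
    (ht₁ : t ≤ 1) :
    HasSum (fun n : ℕ => a⁻¹ * (-b / a) ^ n * t ^ ((n : ℝ) * k)) (a + b * t ^ k)⁻¹ := by
  have htk : |t ^ k| ≤ 1 := by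
    rw [abs_of_nonneg (Real.rpow_nonneg ht₀ k)]
    exact Real.rpow_le_one ht₀ ht₁ hk
  have h : ‖b * t ^ k‖ < ‖a‖ := by
    rw [Real.norm_eq_abs, Real.norm_eq_abs, abs_mul, abs_of_pos ((abs_nonneg b).trans_lt hab)]
    nlinarith [abs_nonneg b, abs_nonneg (t ^ k)]
  simpa only [mul_comm _ k, Real.rpow_mul_natCast ht₀] using hasSum_inv_add_mul_geometric h

lemma integral_rpow_zero_left {k x : ℝ} (hk : -1 < k) :
    ∫ t in (0 : ℝ)..x, t ^ k = x ^ (k + 1) / (k + 1) := by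
  rw [integral_rpow (Or.inl hk), Real.zero_rpow (by linarith), sub_zero]

lemma hasSum_integral_inv_add_mul_rpow {a b k x : ℝ} (hab : |b| < a) (hk : 0 ≤ k) (hx₀ : 0 ≤ x)
    (hx₁ : x ≤ 1) :
    HasSum (fun n : ℕ => a⁻¹ * ((-b / a) ^ n * x ^ ((n : ℝ) * k + 1) / ((n : ℝ) * k + 1)))
      (∫ t in (0 : ℝ)..x, (a + b * t ^ k)⁻¹) := by
  have ha : 0 < a := (abs_nonneg b).trans_lt hab
  have hr : |-b / a| < 1 := by rwa [abs_div, abs_neg, abs_of_pos ha, div_lt_one ha]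
  have hnk : ∀ n : ℕ, 0 ≤ (n : ℝ) * k := fun n => mul_nonneg n.cast_nonneg hk
  have key := intervalIntegral.hasSum_integral_of_dominated_convergence
    (F := fun (n : ℕ) (t : ℝ) => a⁻¹ * (-b / a) ^ n * t ^ ((n : ℝ) * k))
    (fun n _ => a⁻¹ * |-b / a| ^ n)
    (fun n => (by fun_prop : Measurable _).aestronglyMeasurable)
    (fun n => ae_of_all _ fun t ht => by
      rw [uIoc_of_le hx₀] at ht
      have ht₀ : 0 ≤ t ^ ((n : ℝ) * k) := Real.rpow_nonneg ht.1.le _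
      have ht₁ : t ^ ((n : ℝ) * k) ≤ 1 := Real.rpow_le_one ht.1.le (ht.2.trans hx₁) (hnk n)
      rw [Real.norm_eq_abs, abs_mul, abs_mul, abs_pow, abs_inv, abs_of_pos ha,
        abs_of_nonneg ht₀]
      exact mul_le_of_le_one_right (by positivity) ht₁)
    (ae_of_all _ fun _ _ => (summable_geometric_of_lt_one (abs_nonneg _) hr).mul_left _)
    (intervalIntegrable_const (μ := volume))
    (ae_of_all _ fun t ht => by
      rw [uIoc_of_le hx₀] at ht
      exact hasSum_inv_add_mul_rpow hab hk ht.1.le (ht.2.trans hx₁))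
  have hterm : ∀ n : ℕ, ∫ t in (0 : ℝ)..x, a⁻¹ * (-b / a) ^ n * t ^ ((n : ℝ) * k) =
      a⁻¹ * ((-b / a) ^ n * x ^ ((n : ℝ) * k + 1) / ((n : ℝ) * k + 1)) := fun n => by
    rw [intervalIntegral.integral_const_mul, integral_rpow_zero_left (by linarith [hnk n])]
    ring
  simpa only [hterm] using key

theorem conductivity_integral_series_general (h k Km Kcm : ℝ)
    (hh : 0 < h) (hk : 0 < k) (hKcm : |Kcm| < Km)
    (ξ : ℝ → ℝ) (hξ : ∀ z, ξ z = (2 * z + h) / (2 * h))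
    (K : ℝ → ℝ) (hK : ∀ z, K z = Km + Kcm * ξ z ^ k) :
    ∀ z ∈ Set.Icc (-(h / 2)) (h / 2),
      (∫ s in (-(h / 2))..z, 1 / K s) =
        (h / Km) * ∑' n : ℕ,
          (-Kcm / Km) ^ n * ξ z ^ ((n : ℝ) * k + 1) / ((n : ℝ) * k + 1) := by
  rintro z ⟨hz₁, hz₂⟩
  have hξ_affine : ∀ s, ξ s = s / h + 1 / 2 := fun s => by rw [hξ]; field_simp
  have hξz₀ : 0 ≤ ξ z := by rw [hξ]; exact div_nonneg (by linarith) (by linarith)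
  have hξz₁ : ξ z ≤ 1 := by rw [hξ, div_le_one (by linarith)]; linarith
  have hsubst : ∫ s in (-(h / 2))..z, 1 / K s = h * ∫ t in (0 : ℝ)..ξ z, (Km + Kcm * t ^ k)⁻¹ := by
    simp only [hK, hξ_affine, one_div]
    rw [intervalIntegral.integral_comp_div_add (fun t => (Km + Kcm * t ^ k)⁻¹) hh.ne',
      smul_eq_mul]
    congr 2
    field_simp
    ring
  rw [hsubst, ← (hasSum_integral_inv_add_mul_rpow hKcm hk.le hξz₀ hξz₁).tsum_eq, tsum_mul_left]
  ring

theorem conductivity_integral_series (h k Km Kcm : ℝ)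
    (hh : 0 < h) (hk : 0 < k) (hKm : 0 < Km) (hKcm : |Kcm| < Km)
    (ξ : ℝ → ℝ) (hξ : ∀ z, ξ z = (2 * z + h) / (2 * h))
    (K : ℝ → ℝ) (hK : ∀ z, K z = Km + Kcm * ξ z ^ k) :
    ∀ z ∈ Set.Icc (-(h / 2)) (h / 2),
      (∫ s in (-(h / 2))..z, 1 / K s) =
        (h / Km) * ∑' n : ℕ,
          (-Kcm / Km) ^ n * ξ z ^ ((n : ℝ) * k + 1) / ((n : ℝ) * k + 1) :=
  conductivity_integral_series_general h k Km Kcm hh hk hKcm ξ hξ K hK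
end

section
/- Let h > 0, k > 0, K_m > 0 and K_cm ∈ ℝ with |K_cm| < K_m, and let T_m, T_c ∈ ℝ. With ξ(z) = (2z+h)/(2h) and K(z) = K_m + K_cm · ξ(z)^k, define S(x) = Σ_{n=0}^{∞} (-K_cm/K_m)^n · x^{n k + 1} / (n k + 1) for x ∈ [0, 1]. Then S(1) > 0 and the function T(z) = T_m + (T_c - T_m) · S(ξ(z)) / S(1) is the solution of the steady heat conduction boundary value problem: T is continuously differentiable, K(z)·T'(z) is constant in z, and T(-h/2) = T_m, T(h/2) = T_c. -/
/-! Put `q = -K_cm / K_m`, so that `K = K_m (1 - q ξ^k)` and `|q| < 1`. On `[0, 1]` the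
series `S` is the termwise primitive of the geometric series `∑ (q x^k)^n = (1 - q x^k)⁻¹`,
and the termwise derivatives are dominated by a geometric series on a slightly larger
interval `(-r, r)`, so `S' = (1 - q x^k)⁻¹ > 0` there. Hence `S` increases from `S 0 = 0`, giving `S 1 > 0`, and by the
chain rule `K T' = K_m (T_c - T_m) / (h S 1)` is constant. -/

open Set

/-- On `[0, 1]` this is `∫₀ˣ dt / (1 - q tᵏ)`, i.e. `K_m` times the thermal resistance of the
layer `[0, x]` in the coordinate `ξ`. -/
noncomputable def resistanceSeries (q k x : ℝ) : ℝ :=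
  ∑' n : ℕ, q ^ n * x ^ ((n : ℝ) * k + 1) / ((n : ℝ) * k + 1)

theorem exists_one_lt_mul_rpow_lt_one {a : ℝ} (ha : a < 1) (k : ℝ) :
    ∃ r : ℝ, 1 < r ∧ a * r ^ k < 1 := by
  have hcont : ContinuousAt (fun t : ℝ => a * t ^ k) 1 :=
    continuousAt_const.mul (Real.continuousAt_rpow_const 1 k (Or.inl one_ne_zero))
  have hlt : ∀ᶠ t in nhdsWithin (1 : ℝ) (Ioi 1), a * t ^ k < 1 :=
    nhdsWithin_le_nhds (hcont.eventually_lt continuousAt_const (by simpa using ha))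
  exact (eventually_mem_nhdsWithin.and hlt).exists

theorem hasDerivAt_mul_rpow_add_one_div (c : ℝ) {p : ℝ} (hp : 0 ≤ p) (x : ℝ) :
    HasDerivAt (fun y : ℝ => c * y ^ (p + 1) / (p + 1)) (c * x ^ p) x := by
  have hd := ((Real.hasDerivAt_rpow_const (x := x) (p := p + 1)
    (Or.inr (by linarith))).const_mul c).div_const (p + 1)
  rw [add_sub_cancel_right, mul_div_assoc, mul_div_cancel_left₀ _ (by linarith)] at hd
  exact hd

theorem norm_pow_mul_rpow_le {q k r x : ℝ} (hk : 0 ≤ k) (hx : |x| ≤ r) (n : ℕ) :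
    ‖q ^ n * x ^ ((n : ℝ) * k)‖ ≤ (|q| * r ^ k) ^ n := by
  have hr : 0 ≤ r := (abs_nonneg x).trans hx
  calc ‖q ^ n * x ^ ((n : ℝ) * k)‖ = |q| ^ n * |x ^ ((n : ℝ) * k)| := by
        rw [Real.norm_eq_abs, abs_mul, abs_pow]
    _ ≤ |q| ^ n * r ^ ((n : ℝ) * k) := by
        gcongr
        exact (Real.abs_rpow_le_abs_rpow _ _).trans
          (Real.rpow_le_rpow (abs_nonneg x) hx (by positivity))
    _ = (|q| * r ^ k) ^ n := by
        rw [mul_pow, mul_comm (n : ℝ) k, Real.rpow_mul hr, Real.rpow_natCast]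

theorem abs_mul_rpow_lt_one {q k x : ℝ} (hq : |q| < 1) (hk : 0 ≤ k)
    (hx : x ∈ Icc (0 : ℝ) 1) :
    |q * x ^ k| < 1 := by
  rw [abs_mul, abs_of_nonneg (Real.rpow_nonneg hx.1 k)]
  exact mul_lt_one_of_nonneg_of_lt_one_left (abs_nonneg q) hq (Real.rpow_le_one hx.1 hx.2 hk)

theorem one_sub_mul_rpow_pos {q k x : ℝ} (hq : |q| < 1) (hk : 0 ≤ k)
    (hx : x ∈ Icc (0 : ℝ) 1) :
    0 < 1 - q * x ^ k := by
  linarith [(abs_lt.1 (abs_mul_rpow_lt_one hq hk hx)).2]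

theorem tsum_pow_mul_rpow {q k x : ℝ} (hq : |q| < 1) (hk : 0 ≤ k) (hx : x ∈ Icc (0 : ℝ) 1) :
    ∑' n : ℕ, q ^ n * x ^ ((n : ℝ) * k) = (1 - q * x ^ k)⁻¹ := by
  have hterm (n : ℕ) : q ^ n * x ^ ((n : ℝ) * k) = (q * x ^ k) ^ n := by
    rw [mul_pow, mul_comm (n : ℝ) k, Real.rpow_mul hx.1, Real.rpow_natCast]
  rw [tsum_congr hterm]
  exact tsum_geometric_of_norm_lt_one (abs_mul_rpow_lt_one hq hk hx)

theorem continuousOn_inv_one_sub_mul_rpow {q k : ℝ} (hq : |q| < 1) (hk : 0 ≤ k) :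
    ContinuousOn (fun x : ℝ => (1 - q * x ^ k)⁻¹) (Icc 0 1) :=
  (continuousOn_const.sub (continuousOn_const.mul
    (continuousOn_id.rpow_const fun _ _ => Or.inr hk))).inv₀
    fun _ hx => (one_sub_mul_rpow_pos hq hk hx).ne'

section resistanceSeries

variable {q k : ℝ}

theorem resistanceSeries_term_zero (hk : 0 ≤ k) (n : ℕ) :
    q ^ n * (0 : ℝ) ^ ((n : ℝ) * k + 1) / ((n : ℝ) * k + 1) = 0 := by
  rw [Real.zero_rpow (by positivity), mul_zero, zero_div]

theorem resistanceSeries_zero (hk : 0 ≤ k) : resistanceSeries q k 0 = 0 := by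
  simp only [resistanceSeries, resistanceSeries_term_zero hk, tsum_zero]

theorem hasDerivAt_resistanceSeries_tsum {r x : ℝ} (hk : 0 ≤ k) (hqr : |q| * r ^ k < 1)
    (hx : x ∈ Ioo (-r) r) :
    HasDerivAt (resistanceSeries q k) (∑' n : ℕ, q ^ n * x ^ ((n : ℝ) * k)) x := by
  have hr : 0 ≤ r := by linarith [hx.1, hx.2]
  have h0 : (0 : ℝ) ∈ Ioo (-r) r := ⟨by linarith [hx.1, hx.2], by linarith [hx.1, hx.2]⟩
  refine hasDerivAt_tsum_of_isPreconnected (summable_geometric_of_lt_one (by positivity) hqr)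
    isOpen_Ioo (convex_Ioo _ _).isPreconnected
    (fun n y _ => hasDerivAt_mul_rpow_add_one_div _ (by positivity) y)
    (fun n y hy => norm_pow_mul_rpow_le hk (abs_le.2 ⟨hy.1.le, hy.2.le⟩) n) h0 ?_ hx
  simpa only [resistanceSeries_term_zero hk] using summable_zero

theorem hasDerivAt_resistanceSeries (hq : |q| < 1) (hk : 0 ≤ k) {x : ℝ}
    (hx : x ∈ Icc (0 : ℝ) 1) :
    HasDerivAt (resistanceSeries q k) (1 - q * x ^ k)⁻¹ x := by
  obtain ⟨r, hr1, hqr⟩ := exists_one_lt_mul_rpow_lt_one hq k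
  rw [← tsum_pow_mul_rpow hq hk hx]
  exact hasDerivAt_resistanceSeries_tsum hk hqr ⟨by linarith [hx.1], hx.2.trans_lt hr1⟩

theorem strictMonoOn_resistanceSeries (hq : |q| < 1) (hk : 0 ≤ k) :
    StrictMonoOn (resistanceSeries q k) (Icc 0 1) := by
  refine strictMonoOn_of_hasDerivWithinAt_pos (convex_Icc 0 1)
    (fun x hx => (hasDerivAt_resistanceSeries hq hk hx).continuousAt.continuousWithinAt)
    (fun x hx => ?_) (fun x hx => ?_) (f' := fun x => (1 - q * x ^ k)⁻¹)
  · rw [interior_Icc] at hx ⊢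
    exact (hasDerivAt_resistanceSeries hq hk (Ioo_subset_Icc_self hx)).hasDerivWithinAt
  · rw [interior_Icc] at hx
    exact inv_pos.2 (one_sub_mul_rpow_pos hq hk (Ioo_subset_Icc_self hx))

theorem resistanceSeries_one_pos (hq : |q| < 1) (hk : 0 ≤ k) : 0 < resistanceSeries q k 1 := by
  simpa only [resistanceSeries_zero hk] using
    strictMonoOn_resistanceSeries hq hk ⟨le_rfl, zero_le_one⟩ ⟨zero_le_one, le_rfl⟩ one_pos

end resistanceSeries

theorem mapsTo_Icc_div_Icc {h : ℝ} (hh : 0 < h) :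
    MapsTo (fun z : ℝ => (2 * z + h) / (2 * h)) (Icc (-(h / 2)) (h / 2)) (Icc 0 1) :=
  fun z hz => ⟨div_nonneg (by linarith [hz.1]) (by linarith),
    (div_le_one (by linarith)).2 (by linarith [hz.2])⟩

theorem hasDerivAt_two_mul_add_div {h : ℝ} (hh : h ≠ 0) (z : ℝ) :
    HasDerivAt (fun z : ℝ => (2 * z + h) / (2 * h)) (1 / h) z :=
  ((((hasDerivAt_id' z).const_mul 2).add_const h).div_const (2 * h)).congr_deriv (by field_simp)

theorem powerlaw_temperature_series_solution (h k Km Kcm Tm Tc : ℝ)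
    (hh : 0 < h) (hk : 0 < k) (hKm : 0 < Km) (hKcm : |Kcm| < Km)
    (ξ : ℝ → ℝ) (hξ : ∀ z, ξ z = (2 * z + h) / (2 * h))
    (K : ℝ → ℝ) (hK : ∀ z, K z = Km + Kcm * ξ z ^ k)
    (S : ℝ → ℝ)
    (hS : ∀ x, S x = ∑' n : ℕ,
      (-Kcm / Km) ^ n * x ^ ((n : ℝ) * k + 1) / ((n : ℝ) * k + 1))
    (T : ℝ → ℝ)
    (hT : ∀ z, T z = Tm + (Tc - Tm) * S (ξ z) / S 1) :
    0 < S 1 ∧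
    (∃ T' : ℝ → ℝ,
      ContinuousOn T' (Set.Icc (-(h / 2)) (h / 2)) ∧
      (∀ z ∈ Set.Icc (-(h / 2)) (h / 2),
        HasDerivWithinAt T (T' z) (Set.Icc (-(h / 2)) (h / 2)) z) ∧
      (∃ c : ℝ, ∀ z ∈ Set.Icc (-(h / 2)) (h / 2), K z * T' z = c)) ∧
    T (-(h / 2)) = Tm ∧ T (h / 2) = Tc := by
  have hξfun : ξ = fun z => (2 * z + h) / (2 * h) := funext hξ
  have hTfun : T = fun z => Tm + (Tc - Tm) * S (ξ z) / S 1 := funext hT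
  obtain rfl : S = resistanceSeries (-Kcm / Km) k := funext hS
  set q := -Kcm / Km with hq_def
  have hq : |q| < 1 := by rwa [abs_div, abs_neg, abs_of_pos hKm, div_lt_one hKm]
  have hS1 := resistanceSeries_one_pos hq hk.le
  have hξI : MapsTo ξ (Icc (-(h / 2)) (h / 2)) (Icc 0 1) := hξfun ▸ mapsTo_Icc_div_Icc hh
  have hKq (z : ℝ) : K z = Km * (1 - q * ξ z ^ k) := by
    rw [hK, hq_def]; field_simp; ring
  refine ⟨hS1, ⟨fun z => (Tc - Tm) / (resistanceSeries q k 1 * h) * (1 - q * ξ z ^ k)⁻¹,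
    ?_, fun z hz => ?_, ⟨(Tc - Tm) * Km / (resistanceSeries q k 1 * h), fun z hz => ?_⟩⟩,
    ?_, ?_⟩
  · have hξc : ContinuousOn ξ (Icc (-(h / 2)) (h / 2)) := hξfun ▸ by fun_prop
    exact continuousOn_const.mul ((continuousOn_inv_one_sub_mul_rpow hq hk.le).comp hξc hξI)
  · have hSξ := (hasDerivAt_resistanceSeries hq hk.le (hξI hz)).comp z
      (hξfun ▸ hasDerivAt_two_mul_add_div hh.ne' z)
    rw [hTfun]
    exact ((((hSξ.const_mul (Tc - Tm)).div_const _).const_add Tm).congr_deriv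
      (by field_simp)).hasDerivWithinAt
  · have hpos := one_sub_mul_rpow_pos hq hk.le (hξI hz)
    rw [hKq]
    field_simp
  · rw [hT, hξ, show 2 * -(h / 2) + h = 0 by ring, zero_div, resistanceSeries_zero hk.le]
    ring
  · rw [hT, hξ, show (2 * (h / 2) + h) / (2 * h) = 1 by field_simp; ring]
    field_simp
    ring
end
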